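/- Let L be odd with L ≥ 3. Consider the diagonal translation-invariant Hamiltonian H = ∑_{i=1}^{L} H_{i,i+1} on (ℂ³)^{⊗L} (indices mod L), where H_{i,i+1} = id − P_{i,i+1} + (1/(2L))|2⟩⟨2|_i and P = |01⟩⟨01| + |10⟩⟨10| + |02⟩⟨02| + |21⟩⟨21|. Then every computational basis state |i₁,…,i_L⟩ ∈ {0,1,2}^L has ⟨i₁…i_L| H |i₁…i_L⟩ ≥ 1/(2L), with equality exactly for the L cyclic shifts of |2101010…10⟩. -/

import Mathlib

/-- Diagonal energy `⟨i|H|i⟩` of a computational basis string on the cycle of length `L`: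
`+1` for each cyclically adjacent pair not in `{01, 10, 02, 21}` (from `id − P_{k,k+1}`),
plus `1/(2L)` for each occurrence of the symbol `2` (from `(1/(2L))|2⟩⟨2|_k`). -/
noncomputable def cycleEnergy (L : ℕ) (i : Fin L → Fin 3) : ℝ :=
  ∑ k : Fin L,
    ((if (i k, i ⟨((k : ℕ) + 1) % L, Nat.mod_lt _ k.pos⟩) ∈
        ({((0 : Fin 3), (1 : Fin 3)), (1, 0), (0, 2), (2, 1)} : Finset (Fin 3 × Fin 3))
      then (0 : ℝ) else 1)
    + (1 / (2 * (L : ℝ))) * (if i k = 2 then 1 else 0))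

/-- The reference string `2101010…10` of length `L`. -/
def groundString (L : ℕ) : Fin L → Fin 3 :=
  fun j => if (j : ℕ) = 0 then 2 else if (j : ℕ) % 2 = 1 then 1 else 0

/-!
The energy of a string is (number of forbidden bonds) + (number of `2`s)/(2L), and a forbidden
bond alone already costs `1 > 1/(2L)`. If all bonds are allowed, then every `0` is preceded by a
`1` and every `1` is followed by a `0`, so `0`s and `1`s are equally frequent and the number of
`2`s has the parity of `L`; on an odd cycle there is thus at least one `2`. Finally, an allowed
bond is determined by its left letter once we know whether its right letter is a `2`, so an
all-allowed string with a single `2` is forced to be a rotation of `2101…0`.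
-/

open Finset

def allowedPairs : Finset (Fin 3 × Fin 3) :=
  {((0 : Fin 3), (1 : Fin 3)), (1, 0), (0, 2), (2, 1)}

lemma allowedPairs_snd_eq_zero_iff {a b : Fin 3} (h : (a, b) ∈ allowedPairs) :
    b = 0 ↔ a = 1 := by
  revert a b; decide

lemma allowedPairs_snd_unique {a b b' : Fin 3} (h : (a, b) ∈ allowedPairs)
    (h' : (a, b') ∈ allowedPairs) (h2 : b = 2 ↔ b' = 2) : b = b' := by
  revert a b b'; decide

open Fin.NatCast in
theorem Fin.forall_of_add_one {n : ℕ} [NeZero n] {P : Fin n → Prop} (p : Fin n) (hp : P p)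
    (h : ∀ k, P k → P (k + 1)) (k : Fin n) : P k := by
  have key : ∀ j : ℕ, P (p + j) := by
    intro j
    induction j with
    | zero => simpa using hp
    | succ j ih => simpa [← add_assoc] using h _ ih
  simpa using key (k - p).val

section

variable {L : ℕ} [NeZero L]

def badBonds (i : Fin L → Fin 3) : Finset (Fin L) :=
  {k | (i k, i (k + 1)) ∉ allowedPairs}

def twos (i : Fin L → Fin 3) : Finset (Fin L) :=
  {k | i k = 2}

lemma card_badBonds_eq_zero_iff (i : Fin L → Fin 3) :
    #(badBonds i) = 0 ↔ ∀ k, (i k, i (k + 1)) ∈ allowedPairs := by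
  simp [badBonds, filter_eq_empty_iff]

lemma cycleEnergy_eq (i : Fin L → Fin 3) :
    cycleEnergy L i = #(badBonds i) + #(twos i) / (2 * L) := by
  have hsucc (k : Fin L) : (⟨(k + 1) % L, Nat.mod_lt _ k.pos⟩ : Fin L) = k + 1 :=
    Fin.ext (by simp [Fin.val_add])
  simp only [cycleEnergy, hsucc, sum_add_distrib, ← mul_sum, badBonds, twos, natCast_card_filter,
    ite_not]
  unfold allowedPairs
  ring

lemma card_filter_add_one_eq (i : Fin L → Fin 3) (a : Fin 3) :
    #{k | i (k + 1) = a} = #{k | i k = a} :=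
  card_nbij' (· + 1) (· - 1) (fun k hk => by simpa using hk) (fun k hk => by simpa using hk)
    (fun k _ => by simp) (fun k _ => by simp)

lemma odd_card_twos (hodd : Odd L) {i : Fin L → Fin 3}
    (hi : ∀ k, (i k, i (k + 1)) ∈ allowedPairs) : Odd #(twos i) := by
  have h01 : #{k | i k = 0} = #{k | i k = 1} := by
    rw [← card_filter_add_one_eq i 0]
    congr 1
    ext k
    simp [allowedPairs_snd_eq_zero_iff (hi k)]
  have hL : L = #{k | i k = 0} + #{k | i k = 1} + #{k | i k = 2} := by
    simpa [Fin.sum_univ_three] using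
      card_eq_sum_card_fiberwise (f := i) (s := univ) (t := univ) (by simp)
  obtain ⟨r, hr⟩ := hodd
  exact ⟨r - #{k | i k = 1}, by rw [twos]; omega⟩

lemma eq_of_allowed_of_eq_two_iff {i i' : Fin L → Fin 3}
    (hi : ∀ k, (i k, i (k + 1)) ∈ allowedPairs) (hi' : ∀ k, (i' k, i' (k + 1)) ∈ allowedPairs)
    (h2 : ∀ k, i k = 2 ↔ i' k = 2) (p : Fin L) (hp : i p = i' p) : i = i' :=
  funext <| Fin.forall_of_add_one p hp fun k hk =>
    allowedPairs_snd_unique (hi k) (hk ▸ hi' k) (h2 _)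

lemma groundString_eq_two_iff (j : Fin L) : groundString L j = 2 ↔ j = 0 := by
  simp only [groundString, Fin.ext_iff, Fin.val_zero]
  split_ifs <;> simp_all

lemma groundString_allowed (hL : 3 ≤ L) (hodd : Odd L) (j : Fin L) :
    (groundString L j, groundString L (j + 1)) ∈ allowedPairs := by
  have hodd' := Nat.odd_iff.mp hodd
  by_cases hj : (j : ℕ) + 1 = L
  · have : j + 1 = 0 := Fin.ext (by simp [Fin.val_add, hj])
    rw [this]
    simp only [groundString, Fin.val_zero]
    rw [if_neg (by omega), if_neg (by omega)]
    simp [allowedPairs]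
  · have : ((j + 1 : Fin L) : ℕ) = j + 1 := by
      simpa [Fin.val_add] using Nat.mod_eq_of_lt (by omega)
    simp only [groundString, this, allowedPairs]
    split_ifs <;> first | decide | contradiction | omega

lemma card_badBonds_eq_zero_and_card_twos_eq_one_iff (hL : 3 ≤ L) (hodd : Odd L)
    (i : Fin L → Fin 3) :
    #(badBonds i) = 0 ∧ #(twos i) = 1 ↔ ∃ m : Fin L, ∀ k, i k = groundString L (k + m) := by
  have hshift (m k : Fin L) :
      (groundString L (k + m), groundString L (k + 1 + m)) ∈ allowedPairs := by
    rw [add_right_comm]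
    exact groundString_allowed hL hodd _
  have htwo (m k : Fin L) : groundString L (k + m) = 2 ↔ k = -m := by
    rw [groundString_eq_two_iff, add_eq_zero_iff_eq_neg]
  rw [card_badBonds_eq_zero_iff, card_eq_one]
  constructor
  · rintro ⟨hi, p, hp⟩
    have hp' (k : Fin L) : i k = 2 ↔ k = p := by simpa [twos] using congr(k ∈ $hp)
    refine ⟨-p, congrFun (eq_of_allowed_of_eq_two_iff hi (hshift (-p))
      (fun k => by rw [hp', htwo, neg_neg]) p ?_)⟩
    rw [(hp' p).2 rfl, (htwo _ _).2 (neg_neg p).symm]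
  · rintro ⟨m, hm⟩
    obtain rfl : i = fun k => groundString L (k + m) := funext hm
    exact ⟨hshift m, -m, by ext k; simp [twos, htwo]⟩

end

lemma one_div_le_natCast_add_div_and_eq_iff {L B T : ℕ} (hL : 0 < L) (hT : B = 0 → 0 < T) :
    1 / (2 * (L : ℝ)) ≤ B + T / (2 * L) ∧
      ((B : ℝ) + T / (2 * L) = 1 / (2 * L) ↔ B = 0 ∧ T = 1) := by
  have hL' : (0 : ℝ) < 2 * L := by positivity
  rcases Nat.eq_zero_or_pos B with rfl | hB
  · simp only [CharP.cast_eq_zero, zero_add, true_and]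
    rw [div_le_div_iff_of_pos_right hL', div_left_inj' hL'.ne']
    exact ⟨by exact_mod_cast hT rfl, by norm_cast⟩
  · have hlt : 1 / (2 * (L : ℝ)) < B + T / (2 * L) := by
      have : 1 / (2 * (L : ℝ)) < 1 := by
        rw [div_lt_one hL']
        have : (1 : ℝ) ≤ L := by exact_mod_cast hL
        linarith
      have : (1 : ℝ) ≤ B := by exact_mod_cast hB
      have : (0 : ℝ) ≤ T / (2 * L) := by positivity
      linarith
    exact ⟨hlt.le, iff_of_false hlt.ne' (by omega)⟩

theorem ground_state_energy (L : ℕ) (hL : 3 ≤ L) (hodd : Odd L) (i : Fin L → Fin 3) :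
    1 / (2 * (L : ℝ)) ≤ cycleEnergy L i ∧
    (cycleEnergy L i = 1 / (2 * (L : ℝ)) ↔
      ∃ m : Fin L, ∀ k : Fin L,
        i k = groundString L ⟨((k : ℕ) + (m : ℕ)) % L, Nat.mod_lt _ k.pos⟩) := by
  have : NeZero L := ⟨by omega⟩
  have hadd (k m : Fin L) : (⟨(k + m) % L, Nat.mod_lt _ k.pos⟩ : Fin L) = k + m :=
    Fin.ext (Fin.val_add k m).symm
  simp only [hadd, cycleEnergy_eq]
  rw [← card_badBonds_eq_zero_and_card_twos_eq_one_iff hL hodd]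
  exact one_div_le_natCast_add_div_and_eq_iff (Nat.pos_of_neZero L) fun hB =>
    (odd_card_twos hodd ((card_badBonds_eq_zero_iff i).1 hB)).pos
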